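/- There exists a rotation system ρ on the complete graph K_{15} with exactly 66 faces, of which 65 have length 3 and one has length 15, such that the dual graph of (K_{15}, ρ) is simple and the face of length 15 is a cutface. In particular the genus of (K_{15}, ρ) is 13 = γ(K_{15}) + 2. -/

import Mathlib

/-!
Every dart of the explicit rotation system lies on a triangle except the 15 darts of a single
long face, so counting darts (15 + 3 · 65 = 210) gives 66 faces, and Euler's formula
15 - 105 + 66 = -24 gives genus 13. The dual is simple because no dart shares a face with its
reverse and a dart `d` is determined by the pair (face of `d`, face of `d.symm`). The long face is
a cutface: the six triangles spanned by the vertices 9, …, 14 border only one another and the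
long face.
-/

namespace DualSep

open SimpleGraph

variable {V : Type*} [Fintype V] [DecidableEq V]

/-- The dart-reversal permutation of a simple graph. -/
def dartRev (G : SimpleGraph V) : Equiv.Perm G.Dart :=
  Function.Involutive.toPerm SimpleGraph.Dart.symm SimpleGraph.Dart.symm_involutive

/-- `ρ` is a rotation system on `G`: it permutes the darts, preserves the initial vertex of
each dart, and the darts leaving any fixed vertex form a single orbit. -/
structure IsRotationSystem (G : SimpleGraph V) (ρ : Equiv.Perm G.Dart) : Prop where
  fst_fixed : ∀ d : G.Dart, (ρ d).fst = d.fst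
  single_orbit : ∀ d d' : G.Dart, d.fst = d'.fst → ∃ n : ℕ, (ρ ^ n) d = d'

/-- The face permutation `φ = ρ ∘ rev` of a rotation system. -/
def facePerm {G : SimpleGraph V} (ρ : Equiv.Perm G.Dart) : Equiv.Perm G.Dart :=
  ρ * dartRev G

/-- The face (orbit of the face permutation) containing a given dart. -/
def faceOf {G : SimpleGraph V} (ρ : Equiv.Perm G.Dart) (d : G.Dart) : Set G.Dart :=
  {d' | (facePerm ρ).SameCycle d d'}

/-- The set of faces of `(G, ρ)`. -/
def faces {G : SimpleGraph V} (ρ : Equiv.Perm G.Dart) : Set (Set G.Dart) :=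
  Set.range (faceOf ρ)

/-- The dual graph is simple: no dual edge joins a face to itself, and no two distinct
faces are joined by more than one dual edge. -/
def DualSimple {G : SimpleGraph V} (ρ : Equiv.Perm G.Dart) : Prop :=
  (∀ d : G.Dart, faceOf ρ d ≠ faceOf ρ d.symm) ∧
  (∀ d d' : G.Dart, d.edge ≠ d'.edge →
    ¬(faceOf ρ d = faceOf ρ d' ∧ faceOf ρ d.symm = faceOf ρ d'.symm) ∧
    ¬(faceOf ρ d = faceOf ρ d'.symm ∧ faceOf ρ d.symm = faceOf ρ d'))

/-- The dual graph of `(G, ρ)`, as a simple graph on the set of faces: two distinct faces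
are adjacent when some edge of `G` induces a dual edge between them. -/
def dualGraph {G : SimpleGraph V} (ρ : Equiv.Perm G.Dart) : SimpleGraph (faces ρ) where
  Adj F₁ F₂ := F₁ ≠ F₂ ∧
    ∃ d : G.Dart, faceOf ρ d = (F₁ : Set G.Dart) ∧ faceOf ρ d.symm = (F₂ : Set G.Dart)
  symm := by
    constructor
    rintro F₁ F₂ ⟨hne, d, h1, h2⟩
    exact ⟨hne.symm, d.symm, h2, by rwa [SimpleGraph.Dart.symm_symm]⟩
  loopless := by constructor; rintro F ⟨hne, -⟩; exact hne rfl

/-- `C` is a cutface: a face whose removal disconnects the dual graph. -/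
def IsCutface {G : SimpleGraph V} (ρ : Equiv.Perm G.Dart) (C : Set G.Dart) : Prop :=
  C ∈ faces ρ ∧
    ¬((dualGraph ρ).induce {F : faces ρ | (F : Set G.Dart) ≠ C}).Connected

end DualSep

theorem Function.Semiconj.map_iterate {α β : Type*} {e : α → β} {f : α → α} {g : β → β}
    (h : Function.Semiconj e f g) (a : α) (n : ℕ) :
    (List.iterate f a n).map e = List.iterate g (e a) n := by
  induction n generalizing a with
  | zero => rfl
  | succ n ih => simp [List.iterate, ih, h a]

theorem Equiv.Perm.sameCycle_iff_mem_iterate {α : Type*} [Finite α] {f : Equiv.Perm α}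
    {x y : α} {n : ℕ} (hn : 0 < n) (hx : (f ^ n) x = x) :
    f.SameCycle x y ↔ y ∈ List.iterate f x n := by
  rw [List.mem_iterate]
  constructor
  · intro h
    obtain ⟨m, rfl⟩ := h.exists_nat_pow_eq
    have hper : Function.IsPeriodicPt f n x := by
      rwa [Function.IsPeriodicPt, Function.IsFixedPt, ← Equiv.Perm.coe_pow]
    exact ⟨m % n, Nat.mod_lt _ hn, by rw [hper.iterate_mod_apply, Equiv.Perm.coe_pow]⟩
  · rintro ⟨m, -, rfl⟩
    exact ⟨m, by simp [← Equiv.Perm.coe_pow]⟩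

theorem SimpleGraph.not_connected_of_adj_iff {W : Type*} {H : SimpleGraph W} (P : W → Prop)
    (hP : ∀ x y, H.Adj x y → (P x ↔ P y)) {a b : W} (ha : P a) (hb : ¬P b) : ¬H.Connected := by
  intro hconn
  obtain ⟨w⟩ := hconn.preconnected a b
  suffices ∀ {x y} (w : H.Walk x y), P x → P y from hb (this w ha)
  intro x y w
  induction w with
  | nil => exact id
  | cons hadj _ ih => exact fun hx => ih ((hP _ _ hadj).1 hx)

theorem SimpleGraph.ncard_edgeSet_top {V : Type*} [Fintype V] [DecidableEq V] :
    (⊤ : SimpleGraph V).edgeSet.ncard = (Fintype.card V).choose 2 := by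
  rw [← coe_edgeFinset, Set.ncard_coe_finset, card_edgeFinset_top_eq_card_choose_two]

namespace DualSep

open SimpleGraph

section Rotation

variable {V : Type*} [DecidableEq V] {G : SimpleGraph V}

def rotationOfLists (rot : V → List V) (hrot : ∀ v w, w ∈ rot v ↔ G.Adj v w) :
    Equiv.Perm G.Dart where
  toFun d := ⟨(d.fst, (rot d.fst).formPerm d.snd),
    (hrot _ _).1 (List.formPerm_apply_mem_of_mem ((hrot _ _).2 d.adj))⟩
  invFun d := ⟨(d.fst, (rot d.fst).formPerm.symm d.snd),
    (hrot _ _).1 (List.formPerm_mem_iff_mem.1 (by simpa using (hrot _ _).2 d.adj))⟩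
  left_inv d := by ext <;> simp
  right_inv d := by ext <;> simp

theorem rotationOfLists_apply_toProd (rot : V → List V) (hrot : ∀ v w, w ∈ rot v ↔ G.Adj v w)
    (d : G.Dart) : (rotationOfLists rot hrot d).toProd = (d.fst, (rot d.fst).formPerm d.snd) :=
  rfl

theorem rotationOfLists_pow_apply_toProd (rot : V → List V)
    (hrot : ∀ v w, w ∈ rot v ↔ G.Adj v w) (n : ℕ) (d : G.Dart) :
    ((rotationOfLists rot hrot ^ n) d).toProd = (d.fst, ((rot d.fst).formPerm ^ n) d.snd) := by
  induction n with
  | zero => rfl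
  | succ n ih =>
    obtain ⟨hfst, hsnd⟩ := Prod.ext_iff.1 ih
    rw [pow_succ', Equiv.Perm.mul_apply, pow_succ', Equiv.Perm.mul_apply,
      rotationOfLists_apply_toProd, hfst, hsnd]

theorem isRotationSystem_rotationOfLists (rot : V → List V)
    (hrot : ∀ v w, w ∈ rot v ↔ G.Adj v w) (hnodup : ∀ v, (rot v).Nodup) :
    IsRotationSystem G (rotationOfLists rot hrot) where
  fst_fixed _ := rfl
  single_orbit d d' h := by
    obtain ⟨i, hi, hdi⟩ := List.getElem_of_mem ((hrot _ _).2 d.adj)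
    obtain ⟨j, hj, hdj⟩ := List.getElem_of_mem ((hrot _ _).2 (h ▸ d'.adj))
    refine ⟨j + (rot d.fst).length - i, Dart.ext _ _ ?_⟩
    rw [rotationOfLists_pow_apply_toProd, ← hdi, List.formPerm_pow_apply_getElem _ (hnodup _)]
    ext
    · exact h
    · simp only [← hdj]
      congr 1
      rw [show i + (j + (rot d.fst).length - i) = j + (rot d.fst).length by omega,
        Nat.add_mod_right, Nat.mod_eq_of_lt hj]

end Rotation

section Faces

variable {V : Type*} {G : SimpleGraph V} (ρ : Equiv.Perm G.Dart)

theorem faceOf_eq_faceOf_iff {d d' : G.Dart} : faceOf ρ d = faceOf ρ d' ↔ d' ∈ faceOf ρ d := by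
  refine ⟨fun h => h ▸ Equiv.Perm.SameCycle.refl _ _, fun h => ?_⟩
  ext x
  exact ⟨fun hx => (Equiv.Perm.SameCycle.symm h).trans hx, fun hx => h.trans hx⟩

theorem dualSimple_of_injective (hloop : ∀ d, faceOf ρ d ≠ faceOf ρ d.symm)
    (hinj : Function.Injective fun d => (faceOf ρ d, faceOf ρ d.symm)) : DualSimple ρ := by
  refine ⟨hloop, fun d d' hne => ⟨fun ⟨h₁, h₂⟩ => hne ?_, fun ⟨h₁, h₂⟩ => hne ?_⟩⟩
  · rw [@hinj d d' (Prod.ext h₁ h₂)]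
  · rw [@hinj d d'.symm (Prod.ext h₁ (h₂.trans (congrArg _ d'.symm_symm.symm))), Dart.edge_symm]

theorem isCutface_of_adj_iff {C : Set G.Dart} (hC : C ∈ faces ρ) (P : Set G.Dart → Prop)
    (hP : ∀ d, faceOf ρ d ≠ C → faceOf ρ d.symm ≠ C → (P (faceOf ρ d) ↔ P (faceOf ρ d.symm)))
    {a b : G.Dart} (ha : faceOf ρ a ≠ C) (hb : faceOf ρ b ≠ C) (hPa : P (faceOf ρ a))
    (hPb : ¬P (faceOf ρ b)) : IsCutface ρ C := by
  refine ⟨hC, not_connected_of_adj_iff (fun F => P F.1.1) ?_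
    (a := ⟨⟨faceOf ρ a, a, rfl⟩, ha⟩) (b := ⟨⟨faceOf ρ b, b, rfl⟩, hb⟩) hPa hPb⟩
  rintro ⟨⟨_, _⟩, hF₁⟩ ⟨⟨_, _⟩, hF₂⟩ ⟨-, d, rfl, rfl⟩
  exact hP d hF₁ hF₂

theorem faceOf_eq_setOf_mem_iterate [Finite G.Dart] {d : G.Dart} {n : ℕ} (hn : 0 < n)
    (hd : (facePerm ρ ^ n) d = d) : faceOf ρ d = {x | x ∈ List.iterate (facePerm ρ) d n} :=
  Set.ext fun _ => Equiv.Perm.sameCycle_iff_mem_iterate hn hd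

theorem ncard_faceOf [Finite G.Dart] {d : G.Dart} {n : ℕ} (hn : 0 < n)
    (hd : (facePerm ρ ^ n) d = d) (hnodup : (List.iterate (facePerm ρ) d n).Nodup) :
    (faceOf ρ d).ncard = n := by
  classical
  rw [faceOf_eq_setOf_mem_iterate ρ hn hd, ← List.coe_toFinset, Set.ncard_coe_finset,
    List.toFinset_card_of_nodup hnodup, List.length_iterate]

open Classical in
theorem sum_ncard_faceOf [Fintype G.Dart] :
    ∑ F ∈ Finset.univ.image (faceOf ρ), F.ncard = Fintype.card G.Dart := by
  rw [← Finset.card_univ, Finset.card_eq_sum_card_image (faceOf ρ)]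
  refine Finset.sum_congr rfl fun F hF => ?_
  obtain ⟨d, -, rfl⟩ := Finset.mem_image.1 hF
  rw [← Set.ncard_coe_finset]
  congr 1
  ext x
  simp [faceOf_eq_faceOf_iff, eq_comm]

theorem ncard_add_mul_ncard_faces [Fintype G.Dart] {C : Set G.Dart} (hC : C ∈ faces ρ) {k : ℕ}
    (hk : ∀ F ∈ faces ρ, F ≠ C → F.ncard = k) :
    C.ncard + k * ((faces ρ).ncard - 1) = Fintype.card G.Dart := by
  classical
  have hfaces : faces ρ = ↑(Finset.univ.image (faceOf ρ)) := by
    rw [Finset.coe_image, Finset.coe_univ, Set.image_univ, faces]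
  rw [hfaces] at hC hk ⊢
  rw [Set.ncard_coe_finset, ← sum_ncard_faceOf, ← Finset.add_sum_erase _ _ hC,
    Finset.sum_congr rfl fun F hF => hk F (Finset.mem_of_mem_erase hF) (Finset.ne_of_mem_erase hF),
    Finset.sum_const, smul_eq_mul, Finset.card_erase_of_mem hC, mul_comm]

end Faces

namespace K15

-- Row `v` lists the neighbours of `v` in their cyclic order around `v`.
def rotationTable : List (List ℕ) :=
  [[1, 14, 7, 2, 3, 11, 5, 4, 10, 8, 13, 6, 12, 9],
   [2, 8, 12, 7, 6, 11, 4, 3, 14, 0, 9, 5, 13, 10],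
   [3, 0, 7, 13, 8, 1, 10, 5, 14, 11, 6, 9, 4, 12],
   [4, 13, 5, 8, 9, 7, 11, 0, 2, 12, 6, 10, 14, 1],
   [5, 12, 2, 9, 8, 14, 6, 13, 3, 1, 11, 7, 10, 0],
   [6, 14, 2, 10, 7, 12, 4, 0, 11, 8, 3, 13, 1, 9],
   [7, 8, 10, 3, 12, 0, 13, 4, 14, 5, 9, 2, 11, 1],
   [8, 6, 1, 12, 5, 10, 4, 11, 3, 9, 13, 2, 0, 14],
   [9, 3, 5, 11, 12, 1, 2, 13, 0, 10, 6, 7, 14, 4],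
   [10, 13, 7, 3, 8, 4, 2, 6, 5, 1, 0, 11, 14, 12],
   [11, 14, 3, 6, 8, 0, 4, 7, 5, 2, 1, 9, 12, 13],
   [12, 8, 5, 0, 3, 7, 4, 1, 6, 2, 10, 13, 14, 9],
   [13, 10, 9, 14, 0, 6, 3, 2, 4, 5, 7, 1, 8, 11],
   [14, 11, 10, 12, 1, 5, 3, 4, 6, 0, 8, 2, 7, 9],
   [0, 1, 3, 10, 12, 9, 11, 13, 2, 5, 6, 4, 8, 7]]

def cyclicOrder (v : Fin 15) : List (Fin 15) := (rotationTable.getD v []).map (Fin.ofNat 15)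

theorem mem_cyclicOrder : ∀ v w, w ∈ cyclicOrder v ↔ (⊤ : SimpleGraph (Fin 15)).Adj v w := by
  decide +kernel

theorem nodup_cyclicOrder : ∀ v, (cyclicOrder v).Nodup := by decide +kernel

abbrev Dart15 := (⊤ : SimpleGraph (Fin 15)).Dart

def rotation : Equiv.Perm Dart15 := rotationOfLists cyclicOrder mem_cyclicOrder

theorem isRotationSystem_rotation : IsRotationSystem ⊤ rotation :=
  isRotationSystem_rotationOfLists cyclicOrder mem_cyclicOrder nodup_cyclicOrder

/- The finite checks below run on the numeral `15 * u + v` of a dart `(u, v)` rather than on the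
dart itself: the kernel evaluates the face permutation on numerals much faster.
`dartCode_facePerm` ties the two together. -/
def dartCode (d : Dart15) : ℕ := 15 * (d.fst : ℕ) + d.snd

def swapCode (c : ℕ) : ℕ := 15 * (c % 15) + c / 15

def succCode (u v : ℕ) : ℕ :=
  let l := rotationTable.getD u []
  l.getD ((l.idxOf v + 1) % l.length) 0

def faceStepCode (c : ℕ) : ℕ := 15 * (c % 15) + succCode (c % 15) (c / 15)

-- A period of the dart coded by `c`; `nodup_faceCodes` shows that it is the least one.
def faceLength (c : ℕ) : ℕ := if faceStepCode^[3] c = c then 3 else 15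

def faceCodes (c : ℕ) : List ℕ := List.iterate faceStepCode c (faceLength c)

def longFaceDart : Dart15 := ⟨(0, 9), by decide⟩

theorem dartCode_facePerm : ∀ d, dartCode (facePerm rotation d) = faceStepCode (dartCode d) := by
  decide +kernel

theorem iterate_faceLength :
    ∀ d, faceStepCode^[faceLength (dartCode d)] (dartCode d) = dartCode d := by
  decide +kernel

theorem nodup_faceCodes : ∀ d, (faceCodes (dartCode d)).Nodup := by decide +kernel

theorem faceLength_eq_three_or_mem_faceCodes_longFaceDart :
    ∀ d, faceLength (dartCode d) = 3 ∨ dartCode d ∈ faceCodes (dartCode longFaceDart) := by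
  decide +kernel

theorem faceLength_longFaceDart : faceLength (dartCode longFaceDart) = 15 := by decide +kernel

theorem dartCode_symm_not_mem_faceCodes : ∀ d, dartCode d.symm ∉ faceCodes (dartCode d) := by
  decide +kernel

theorem eq_of_swapCode_mem_faceCodes : ∀ d, ∀ c ∈ faceCodes (dartCode d),
    swapCode c ∈ faceCodes (dartCode d.symm) → c = dartCode d := by
  decide +kernel

theorem forall_mem_faceCodes_nine_le_iff_symm :
    ∀ d, dartCode d ∉ faceCodes (dartCode longFaceDart) →
    dartCode d.symm ∉ faceCodes (dartCode longFaceDart) →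
    ((∀ c ∈ faceCodes (dartCode d), 9 ≤ c / 15) ↔
      ∀ c ∈ faceCodes (dartCode d.symm), 9 ≤ c / 15) := by
  decide +kernel

theorem dartCode_injective : Function.Injective dartCode := by
  intro d d' h
  have := d.fst.isLt; have := d.snd.isLt; have := d'.fst.isLt; have := d'.snd.isLt
  simp only [dartCode] at h
  exact Dart.ext _ _ (Prod.ext (Fin.ext (by omega)) (Fin.ext (by omega)))

theorem dartCode_symm (d : Dart15) : dartCode d.symm = swapCode (dartCode d) := by
  have := d.fst.isLt; have := d.snd.isLt
  simp only [dartCode, swapCode, Dart.symm_toProd, Prod.fst_swap, Prod.snd_swap]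
  omega

theorem dartCode_div (d : Dart15) : dartCode d / 15 = d.fst := by
  have := d.snd.isLt
  simp only [dartCode]
  omega

theorem semiconj_dartCode : Function.Semiconj dartCode (facePerm rotation) faceStepCode :=
  dartCode_facePerm

theorem faceLength_pos (d : Dart15) : 0 < faceLength (dartCode d) := by
  unfold faceLength; split_ifs <;> norm_num

theorem facePerm_pow_faceLength (d : Dart15) :
    (facePerm rotation ^ faceLength (dartCode d)) d = d :=
  dartCode_injective <| by
    rw [Equiv.Perm.coe_pow, semiconj_dartCode.iterate_right, iterate_faceLength]

theorem faceOf_rotation (d : Dart15) :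
    faceOf rotation d = {x | x ∈ List.iterate (facePerm rotation) d (faceLength (dartCode d))} :=
  faceOf_eq_setOf_mem_iterate rotation (faceLength_pos d) (facePerm_pow_faceLength d)

theorem mem_faceOf_rotation {d x : Dart15} :
    x ∈ faceOf rotation d ↔ dartCode x ∈ faceCodes (dartCode d) := by
  rw [faceOf_rotation, Set.mem_ofPred_eq, faceCodes, ← semiconj_dartCode.map_iterate,
    List.mem_map_of_injective dartCode_injective]

theorem ncard_faceOf_rotation (d : Dart15) :
    (faceOf rotation d).ncard = faceLength (dartCode d) := by
  refine ncard_faceOf rotation (faceLength_pos d) (facePerm_pow_faceLength d) ?_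
  rw [← List.nodup_map_iff dartCode_injective, semiconj_dartCode.map_iterate]
  exact nodup_faceCodes d

theorem forall_mem_faceOf_rotation_iff (d : Dart15) (p : ℕ → Prop) :
    (∀ x ∈ faceOf rotation d, p x.fst) ↔ ∀ c ∈ faceCodes (dartCode d), p (c / 15) := by
  rw [faceOf_rotation, faceCodes, ← semiconj_dartCode.map_iterate, List.forall_mem_map]
  simp only [Set.mem_ofPred_eq, dartCode_div]

def longFace : Set Dart15 := faceOf rotation longFaceDart

theorem longFace_mem_faces : longFace ∈ faces rotation := ⟨longFaceDart, rfl⟩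

theorem ncard_longFace : longFace.ncard = 15 := by
  rw [longFace, ncard_faceOf_rotation, faceLength_longFaceDart]

theorem faceOf_eq_longFace_iff {d : Dart15} :
    faceOf rotation d = longFace ↔ dartCode d ∈ faceCodes (dartCode longFaceDart) := by
  rw [longFace, eq_comm, faceOf_eq_faceOf_iff, mem_faceOf_rotation]

theorem ncard_eq_three_of_ne_longFace {F : Set Dart15} (hF : F ∈ faces rotation)
    (hne : F ≠ longFace) : F.ncard = 3 := by
  obtain ⟨d, rfl⟩ := hF
  rw [ncard_faceOf_rotation]
  exact (faceLength_eq_three_or_mem_faceCodes_longFaceDart d).resolve_right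
    (mt faceOf_eq_longFace_iff.2 hne)

theorem ncard_faces_rotation : (faces rotation).ncard = 66 := by
  have h := ncard_add_mul_ncard_faces rotation longFace_mem_faces
    fun _ => ncard_eq_three_of_ne_longFace
  rw [ncard_longFace, dart_card_eq_twice_card_edges, card_edgeFinset_top_eq_card_choose_two,
    Fintype.card_fin, show Nat.choose 15 2 = 105 from rfl] at h
  omega

theorem ncard_sep_faces_ncard_eq_three : {F ∈ faces rotation | F.ncard = 3}.ncard = 65 := by
  have : {F ∈ faces rotation | F.ncard = 3} = faces rotation \ {longFace} := by
    ext F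
    refine ⟨fun ⟨hF, h3⟩ => ⟨hF, fun h => ?_⟩,
      fun ⟨hF, hne⟩ => ⟨hF, ncard_eq_three_of_ne_longFace hF hne⟩⟩
    rw [Set.mem_singleton_iff.1 h, ncard_longFace] at h3
    exact absurd h3 (by norm_num)
  rw [this, Set.ncard_sdiff_singleton_of_mem longFace_mem_faces, ncard_faces_rotation]

theorem sep_faces_ncard_eq_fifteen : {F ∈ faces rotation | F.ncard = 15} = {longFace} := by
  ext F
  refine ⟨fun ⟨hF, h15⟩ => ?_, fun h => ?_⟩
  · by_contra hne
    rw [ncard_eq_three_of_ne_longFace hF hne] at h15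
    exact absurd h15 (by norm_num)
  · rw [Set.mem_singleton_iff.1 h]
    exact ⟨longFace_mem_faces, ncard_longFace⟩

theorem dualSimple_rotation : DualSimple rotation := by
  refine dualSimple_of_injective rotation
    (fun d h => dartCode_symm_not_mem_faceCodes d ?_) fun d d' h => ?_
  · exact mem_faceOf_rotation.1 ((faceOf_eq_faceOf_iff rotation).1 h)
  · obtain ⟨h₁, h₂⟩ := Prod.ext_iff.1 h
    have h₁' := mem_faceOf_rotation.1 ((faceOf_eq_faceOf_iff rotation).1 h₁)
    have h₂' := mem_faceOf_rotation.1 ((faceOf_eq_faceOf_iff rotation).1 h₂)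
    rw [dartCode_symm d'] at h₂'
    exact (dartCode_injective (eq_of_swapCode_mem_faceCodes d _ h₁' h₂')).symm

theorem isCutface_longFace : IsCutface rotation longFace := by
  refine isCutface_of_adj_iff rotation longFace_mem_faces (fun F => ∀ x ∈ F, 9 ≤ (x.fst : ℕ))
    (fun d hd hd' => ?_) (a := ⟨(9, 10), by decide⟩) (b := ⟨(0, 1), by decide⟩)
    (mt faceOf_eq_longFace_iff.1 (by decide +kernel))
    (mt faceOf_eq_longFace_iff.1 (by decide +kernel))
    ((forall_mem_faceOf_rotation_iff _ _).2 (by decide +kernel))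
    (fun h => absurd (h _ (Equiv.Perm.SameCycle.refl _ _)) (by decide))
  rw [forall_mem_faceOf_rotation_iff d (9 ≤ ·), forall_mem_faceOf_rotation_iff d.symm (9 ≤ ·)]
  exact forall_mem_faceCodes_nine_le_iff_symm d (mt faceOf_eq_longFace_iff.2 hd)
    (mt faceOf_eq_longFace_iff.2 hd')

end K15

end DualSep

open DualSep in
/-- There is a rotation system on `K_{15}` with 66 faces of the stated lengths, simple
dual, whose face of length 15 is a cutface; its genus is 13 = γ(K_{15}) + 2. -/
theorem stmt_K15 :
    ∃ ρ : Equiv.Perm (⊤ : SimpleGraph (Fin 15)).Dart,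
      IsRotationSystem ⊤ ρ ∧
      (faces ρ).ncard = 66 ∧
      {F ∈ faces ρ | F.ncard = 3}.ncard = 65 ∧
      {F ∈ faces ρ | F.ncard = 15}.ncard = 1 ∧
      DualSimple ρ ∧
      (∃ C ∈ faces ρ, C.ncard = 15 ∧ IsCutface ρ C) ∧
      ((Fintype.card (Fin 15) : ℤ) - ((⊤ : SimpleGraph (Fin 15)).edgeSet.ncard : ℤ)
          + ((faces ρ).ncard : ℤ) = 2 - 2 * 13) := by
  refine ⟨K15.rotation, K15.isRotationSystem_rotation, K15.ncard_faces_rotation,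
    K15.ncard_sep_faces_ncard_eq_three, by rw [K15.sep_faces_ncard_eq_fifteen, Set.ncard_singleton],
    K15.dualSimple_rotation,
    ⟨K15.longFace, K15.longFace_mem_faces, K15.ncard_longFace, K15.isCutface_longFace⟩, ?_⟩
  rw [K15.ncard_faces_rotation, SimpleGraph.ncard_edgeSet_top, Fintype.card_fin,
    show Nat.choose 15 2 = 105 from rfl]
  norm_num
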